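/- If u₁ and u₂ are solutions of the Gauss hypergeometric equation t(1-t)u'' + (1 - (3/2)t)u' - (5/144)u = 0 on a domain avoiding t ∈ {0,1}, then the function t·u₁(t)·u₂(t) is a solution of W₃u = 0, where W₃ = d³/dt³ + (3/(2(t-1)))d²/dt² + ((5t-36)/(36t²(t-1)))d/dt + (72-5t)/(72t³(t-1)). -/

import Mathlib

noncomputable def W3op (u : ℝ → ℝ) : ℝ → ℝ := fun t =>
  deriv^[3] u t + (3/(2*(t-1))) * deriv^[2] u t
    + ((5*t - 36)/(36*t^2*(t-1))) * deriv u t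
    + ((72 - 5*t)/(72*t^3*(t-1))) * u t

private lemma diffIter {u : ℝ → ℝ} (hu : ContDiff ℝ (⊤ : ℕ∞) u) (n : ℕ) :
    Differentiable ℝ (deriv^[n] u) := by
  have h : ContDiff ℝ ((⊤:ℕ∞) : WithTop ℕ∞) (deriv^[n] u) := (hu.of_le (by simp)).iterate_deriv n
  exact h.differentiable (by simp)

private lemma hd0 {u : ℝ → ℝ} (hu : ContDiff ℝ (⊤ : ℕ∞) u) (t : ℝ) :
    HasDerivAt u (deriv u t) t := ((diffIter hu 0) t).hasDerivAt

private lemma hd1 {u : ℝ → ℝ} (hu : ContDiff ℝ (⊤ : ℕ∞) u) (t : ℝ) :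
    HasDerivAt (deriv u) (deriv (deriv u) t) t := ((diffIter hu 1) t).hasDerivAt

private lemma hd2 {u : ℝ → ℝ} (hu : ContDiff ℝ (⊤ : ℕ∞) u) (t : ℝ) :
    HasDerivAt (deriv (deriv u)) (deriv (deriv (deriv u)) t) t :=
  ((diffIter hu 2) t).hasDerivAt

/-- the ODE differentiated once -/
private lemma ode' {Ω : Set ℝ} (hΩ : IsOpen Ω) {u : ℝ → ℝ} (hu : ContDiff ℝ (⊤ : ℕ∞) u)
    (hs : ∀ t ∈ Ω, t*(1-t) * deriv^[2] u t + (1 - (3/2)*t) * deriv u t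
      - (5/144) * u t = 0) {t : ℝ} (ht : t ∈ Ω) :
    t*(1-t) * deriv (deriv (deriv u)) t + (2 - (7/2)*t) * deriv (deriv u) t
      - (221/144) * deriv u t = 0 := by
  set F : ℝ → ℝ := fun s => s*(1-s) * deriv (deriv u) s + (1 - (3/2)*s) * deriv u s
      - (5/144) * u s with hF
  have hq : HasDerivAt (fun s : ℝ => s*(1-s)) (1-2*t) t := by
    have := (hasDerivAt_id t).fun_mul ((hasDerivAt_const t (1:ℝ)).fun_sub (hasDerivAt_id t))
    refine this.congr_deriv ?_
    simp only [id_eq]; ring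
  have hl : HasDerivAt (fun s : ℝ => 1-(3/2)*s) (-(3/2)) t := by
    have := (hasDerivAt_const t (1:ℝ)).fun_sub ((hasDerivAt_const t ((3:ℝ)/2)).fun_mul (hasDerivAt_id t))
    refine this.congr_deriv ?_
    simp only [id_eq]; ring
  have hDF : HasDerivAt F (t*(1-t) * deriv (deriv (deriv u)) t
      + (2 - (7/2)*t) * deriv (deriv u) t - (221/144) * deriv u t) t := by
    have := ((hq.fun_mul (hd2 hu t)).fun_add (hl.fun_mul (hd1 hu t))).fun_sub
      ((hasDerivAt_const t ((5:ℝ)/144)).fun_mul (hd0 hu t))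
    refine this.congr_deriv ?_
    ring
  have hFeq : F =ᶠ[nhds t] fun _ => (0:ℝ) := by
    filter_upwards [hΩ.mem_nhds ht] with s hsΩ
    exact hs s hsΩ
  have h0 : deriv F t = 0 := by
    rw [hFeq.deriv_eq]; simp
  rw [← hDF.deriv]; exact h0

set_option maxHeartbeats 1000000 in
/-- if u₁, u₂ solve the Gauss hypergeometric equation
t(1-t)u'' + (1-(3/2)t)u' - (5/144)u = 0 on Ω (with 0,1 ∉ Ω), then
t·u₁(t)·u₂(t) solves W₃u = 0 on Ω. -/
theorem product_solution (Ω : Set ℝ) (hΩ : IsOpen Ω)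
    (h0 : (0:ℝ) ∉ Ω) (h1 : (1:ℝ) ∉ Ω)
    (u1 u2 : ℝ → ℝ) (hu1 : ContDiff ℝ (⊤ : ℕ∞) u1) (hu2 : ContDiff ℝ (⊤ : ℕ∞) u2)
    (hs1 : ∀ t ∈ Ω, t*(1-t) * deriv^[2] u1 t + (1 - (3/2)*t) * deriv u1 t
      - (5/144) * u1 t = 0)
    (hs2 : ∀ t ∈ Ω, t*(1-t) * deriv^[2] u2 t + (1 - (3/2)*t) * deriv u2 t
      - (5/144) * u2 t = 0) :
    ∀ t ∈ Ω, W3op (fun s => s * u1 s * u2 s) t = 0 := by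
  intro t ht
  have ht0 : t ≠ 0 := fun h => h0 (h ▸ ht)
  have ht1 : t - 1 ≠ 0 := by
    intro h
    have htt : t = 1 := by linarith
    exact h1 (htt ▸ ht)
  set w : ℝ → ℝ := fun s => s * u1 s * u2 s with hwdef
  set w1 : ℝ → ℝ := fun s => u1 s * u2 s + s * deriv u1 s * u2 s + s * u1 s * deriv u2 s
    with hw1def
  set w2 : ℝ → ℝ := fun s => 2 * deriv u1 s * u2 s + 2 * u1 s * deriv u2 s
      + s * deriv (deriv u1) s * u2 s + 2 * (s * deriv u1 s * deriv u2 s)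
      + s * u1 s * deriv (deriv u2) s with hw2def
  have hDw : ∀ s, HasDerivAt w (w1 s) s := by
    intro s
    have := ((hasDerivAt_id s).fun_mul (hd0 hu1 s)).fun_mul (hd0 hu2 s)
    refine this.congr_deriv ?_
    simp only [hw1def, id_eq]; ring
  have hDw1 : ∀ s, HasDerivAt w1 (w2 s) s := by
    intro s
    have := (((hd0 hu1 s).fun_mul (hd0 hu2 s)).fun_add
        (((hasDerivAt_id s).fun_mul (hd1 hu1 s)).fun_mul (hd0 hu2 s))).fun_add
        (((hasDerivAt_id s).fun_mul (hd0 hu1 s)).fun_mul (hd1 hu2 s))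
    refine this.congr_deriv ?_
    simp only [hw2def, id_eq]; ring
  have hderiv_w : deriv w = w1 := funext fun s => (hDw s).deriv
  have hderiv_w1 : deriv w1 = w2 := funext fun s => (hDw1 s).deriv
  have hDw2 : HasDerivAt w2 (3 * deriv (deriv u1) t * u2 t + 3 * u1 t * deriv (deriv u2) t
      + 6 * (deriv u1 t * deriv u2 t) + t * deriv (deriv (deriv u1)) t * u2 t
      + 3 * (t * deriv (deriv u1) t * deriv u2 t) + 3 * (t * deriv u1 t * deriv (deriv u2) t)
      + t * u1 t * deriv (deriv (deriv u2)) t) t := by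
    have hA := ((hasDerivAt_const t (2:ℝ)).fun_mul (hd1 hu1 t)).fun_mul (hd0 hu2 t)
    have hB := ((hasDerivAt_const t (2:ℝ)).fun_mul (hd0 hu1 t)).fun_mul (hd1 hu2 t)
    have hC := ((hasDerivAt_id t).fun_mul (hd2 hu1 t)).fun_mul (hd0 hu2 t)
    have hD := (hasDerivAt_const t (2:ℝ)).fun_mul
      (((hasDerivAt_id t).fun_mul (hd1 hu1 t)).fun_mul (hd1 hu2 t))
    have hE := ((hasDerivAt_id t).fun_mul (hd0 hu1 t)).fun_mul (hd2 hu2 t)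
    have := (((hA.fun_add hB).fun_add hC).fun_add hD).fun_add hE
    refine this.congr_deriv ?_
    simp only [id_eq]; ring
  have e3 : deriv^[3] w t = deriv w2 t := by
    have : deriv^[3] w = deriv (deriv (deriv w)) := rfl
    rw [this, hderiv_w, hderiv_w1]
  have e2 : deriv^[2] w t = w2 t := by
    have : deriv^[2] w = deriv (deriv w) := rfl
    rw [this, hderiv_w, hderiv_w1]
  have e1 : deriv w t = w1 t := by rw [hderiv_w]
  have E1 : t*(1-t) * deriv (deriv u1) t + (1 - (3/2)*t) * deriv u1 t
      - (5/144) * u1 t = 0 := hs1 t ht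
  have E2 : t*(1-t) * deriv (deriv u2) t + (1 - (3/2)*t) * deriv u2 t
      - (5/144) * u2 t = 0 := hs2 t ht
  have E1' := ode' hΩ hu1 hs1 ht
  have E2' := ode' hΩ hu2 hs2 ht
  have h1t : (1:ℝ) - t ≠ 0 := by intro h; apply ht1; linarith
  have ha3 : deriv (deriv (deriv u1)) t
      = ((221/144) * deriv u1 t - (2 - (7/2)*t) * deriv (deriv u1) t) / (t*(1-t)) := by
    field_simp
    linarith [E1']
  have hb3 : deriv (deriv (deriv u2)) t
      = ((221/144) * deriv u2 t - (2 - (7/2)*t) * deriv (deriv u2) t) / (t*(1-t)) := by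
    field_simp
    linarith [E2']
  have ha2 : deriv (deriv u1) t
      = ((5/144) * u1 t - (1 - (3/2)*t) * deriv u1 t) / (t*(1-t)) := by
    field_simp
    linarith [E1]
  have hb2 : deriv (deriv u2) t
      = ((5/144) * u2 t - (1 - (3/2)*t) * deriv u2 t) / (t*(1-t)) := by
    field_simp
    linarith [E2]
  show deriv^[3] w t + (3/(2*(t-1))) * deriv^[2] w t
    + ((5*t - 36)/(36*t^2*(t-1))) * deriv w t
    + ((72 - 5*t)/(72*t^3*(t-1))) * w t = 0
  rw [e3, hDw2.deriv, e2, e1]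
  simp only [hw1def, hw2def, hwdef]
  rw [ha3, hb3, ha2, hb2]
  field_simp
  ring
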